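/- arXiv:1303.4328 — 2 statements merged into one kernel-verified Lean document; each statement's English description precedes it below -/
import Mathlib

section
/- Let X be a topological space and f, g : X → ℝ continuous with sup_{x∈X} |f(x) − g(x)| < ε. With F_r^h(a,b) = dim(image(H_r(h⁻¹((-∞,a])) → H_r(X)) ∩ image(H_r(h⁻¹([b,∞))) → H_r(X))) for a continuous map h, one has F_r^f(a−ε, b+ε) ≤ F_r^g(a,b) for all a ≤ b. -/
open CategoryTheory

lemma range_map_homOfLE_mono {R : Type*} [Ring R] {α : Type*} [Preorder α]
    (H : α ⥤ ModuleCat R) {A B C : α} (hAB : A ≤ B) (hAC : A ≤ C) (hBC : B ≤ C) :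
    LinearMap.range (H.map (homOfLE hAC)).hom ≤ LinearMap.range (H.map (homOfLE hBC)).hom := by
  rw [show homOfLE hAC = homOfLE hAB ≫ homOfLE hBC from rfl, H.map_comp, ModuleCat.hom_comp,
    LinearMap.range_comp]
  exact LinearMap.map_le_range

lemma preimage_Iic_sub_subset {X : Type*} {f g : X → ℝ} {ε : ℝ} (hfg : ∀ x, |f x - g x| ≤ ε)
    (a : ℝ) : f ⁻¹' Set.Iic (a - ε) ⊆ g ⁻¹' Set.Iic a := fun x hx => by
  change f x ≤ a - ε at hx
  change g x ≤ a
  linarith [(abs_le.1 (hfg x)).1]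

lemma preimage_Ici_add_subset {X : Type*} {f g : X → ℝ} {ε : ℝ} (hfg : ∀ x, |f x - g x| ≤ ε)
    (b : ℝ) : f ⁻¹' Set.Ici (b + ε) ⊆ g ⁻¹' Set.Ici b := fun x hx => by
  change b + ε ≤ f x at hx
  change b ≤ g x
  linarith [(abs_le.1 (hfg x)).2]

theorem F_stability_general
    (κ : Type) [Field κ] {X : Type}
    (f g : X → ℝ)
    (ε : ℝ) (hfg : ∀ x, |f x - g x| < ε)
    (H : Set X ⥤ ModuleCat κ)
    (a b : ℝ) :
    Module.rank κ
        ↥(LinearMap.range (H.map (homOfLE (le_top : f ⁻¹' (Set.Iic (a - ε)) ≤ ⊤))).hom ⊓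
          LinearMap.range (H.map (homOfLE (le_top : f ⁻¹' (Set.Ici (b + ε)) ≤ ⊤))).hom) ≤
      Module.rank κ
        ↥(LinearMap.range (H.map (homOfLE (le_top : g ⁻¹' (Set.Iic a) ≤ ⊤))).hom ⊓
          LinearMap.range (H.map (homOfLE (le_top : g ⁻¹' (Set.Ici b) ≤ ⊤))).hom) := by
  have hfg' : ∀ x, |f x - g x| ≤ ε := fun x => (hfg x).le
  exact Submodule.rank_mono <| inf_le_inf
    (range_map_homOfLE_mono H (preimage_Iic_sub_subset hfg' a) _ _)
    (range_map_homOfLE_mono H (preimage_Ici_add_subset hfg' b) _ _)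

/-- If `f, g : X → ℝ` are continuous with `|f − g| < ε` pointwise, then
`F_r^f(a−ε, b+ε) ≤ F_r^g(a,b)` for all `a ≤ b`, where
`F_r^h(x,y) = dim (image(H_r(h⁻¹((-∞,x])) → H_r(X)) ∩ image(H_r(h⁻¹([y,∞))) → H_r(X)))`.
Homology in a fixed degree with field coefficients, with all inclusion-induced maps, is
encoded as a functor `H` from the poset of subsets of `X` to vector spaces. -/
theorem F_stability
    (κ : Type) [Field κ] {X : Type} [TopologicalSpace X]
    (f g : X → ℝ) (hf : Continuous f) (hg : Continuous g)
    (ε : ℝ) (hfg : ∀ x, |f x - g x| < ε)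
    (H : Set X ⥤ ModuleCat κ)
    (a b : ℝ) (hab : a ≤ b) :
    Module.rank κ
        ↥(LinearMap.range (H.map (homOfLE (le_top : f ⁻¹' (Set.Iic (a - ε)) ≤ ⊤))).hom ⊓
          LinearMap.range (H.map (homOfLE (le_top : f ⁻¹' (Set.Ici (b + ε)) ≤ ⊤))).hom) ≤
      Module.rank κ
        ↥(LinearMap.range (H.map (homOfLE (le_top : g ⁻¹' (Set.Iic a) ≤ ⊤))).hom ⊓
          LinearMap.range (H.map (homOfLE (le_top : g ⁻¹' (Set.Ici b) ≤ ⊤))).hom) :=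
  F_stability_general κ f g ε hfg H a b
end

section
/- Let X be a topological space, f : X → ℝ continuous, and a ≥ b real numbers, so that X = X_a ∪ X^b where X_a = f⁻¹((-∞,a]) and X^b = f⁻¹([b,∞)). Then I_a(r) ∩ I^b(r) = image(H_r(X_a ∩ X^b) → H_r(X)), where I_a(r) and I^b(r) are the images of H_r(X_a) and H_r(X^b) in H_r(X). In particular, if H_r(f⁻¹([b,a])) is finite dimensional then dim(I_a(r) ∩ I^b(r)) is finite. -/
open CategoryTheory

/-! Homology of subsets of `X` in a fixed degree is the functor `H`, and `hMV` is
Mayer–Vietoris exactness at `H(X_a) ⊕ H(X^b)`. The image of `H(X_a ∩ X^b)` lies in both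
images since the inclusion into `X` factors through `X_a` and through `X^b`. Conversely, a
class in both images is `i u = j v` with `u ∈ H(X_a)`, `v ∈ H(X^b)`, and exactness lifts `u`
to `H(X_a ∩ X^b)`. -/

theorem LinearMap.range_inf_range_eq_range_comp {R A B C M : Type*} [Semiring R]
    [AddCommMonoid A] [AddCommMonoid B] [AddCommMonoid C] [AddCommMonoid M]
    [Module R A] [Module R B] [Module R C] [Module R M]
    (i : A →ₗ[R] M) (j : B →ₗ[R] M) (p : C →ₗ[R] A) (q : C →ₗ[R] B)
    (hcomm : i ∘ₗ p = j ∘ₗ q) (hexact : ∀ u v, i u = j v → ∃ w, p w = u) :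
    range i ⊓ range j = range (i ∘ₗ p) := by
  apply le_antisymm
  · rintro x ⟨⟨u, rfl⟩, ⟨v, hv⟩⟩
    obtain ⟨w, rfl⟩ := hexact u v hv.symm
    exact ⟨w, rfl⟩
  · rintro x ⟨w, rfl⟩
    exact ⟨⟨p w, rfl⟩, ⟨q w, congrArg (· w) hcomm.symm⟩⟩

theorem CategoryTheory.Functor.range_map_inf_range_map_eq_range_map {P R : Type*}
    [SemilatticeInf P] [Ring R] (H : P ⥤ ModuleCat R) {U V W : P} (hU : U ≤ W) (hV : V ≤ W)
    (hexact : ∀ u v, H.map (homOfLE hU) u = H.map (homOfLE hV) v →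
      ∃ w, H.map (homOfLE (inf_le_left : U ⊓ V ≤ U)) w = u) :
    LinearMap.range (H.map (homOfLE hU)).hom ⊓ LinearMap.range (H.map (homOfLE hV)).hom =
      LinearMap.range (H.map (homOfLE ((inf_le_left : U ⊓ V ≤ U).trans hU))).hom := by
  have hfactor (hUV : U ⊓ V ≤ U) (hUVW : U ⊓ V ≤ W) :
      (H.map (homOfLE hUVW)).hom = (H.map (homOfLE hU)).hom ∘ₗ (H.map (homOfLE hUV)).hom := by
    rw [← ModuleCat.hom_comp, ← H.map_comp]
    rfl
  rw [hfactor inf_le_left]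
  refine LinearMap.range_inf_range_eq_range_comp _ _ _ (H.map (homOfLE inf_le_right)).hom ?_ hexact
  rw [← ModuleCat.hom_comp, ← ModuleCat.hom_comp, ← H.map_comp, ← H.map_comp]
  rfl

theorem image_inter_eq_image_of_interlevel_general
    (κ : Type) [Field κ] {X : Type}
    (f : X → ℝ)
    (a b : ℝ)
    (H : Set X ⥤ ModuleCat κ)
    (hMV : ∀ (u : H.obj (f ⁻¹' (Set.Iic a))) (v : H.obj (f ⁻¹' (Set.Ici b))),
      H.map (homOfLE (le_top : f ⁻¹' (Set.Iic a) ≤ ⊤)) u =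
        H.map (homOfLE (le_top : f ⁻¹' (Set.Ici b) ≤ ⊤)) v →
      ∃ w : H.obj (f ⁻¹' (Set.Iic a) ∩ f ⁻¹' (Set.Ici b)),
        H.map (homOfLE Set.inter_subset_left) w = u ∧
        H.map (homOfLE Set.inter_subset_right) w = v) :
    LinearMap.range (H.map (homOfLE (le_top : f ⁻¹' (Set.Iic a) ≤ ⊤))).hom ⊓
        LinearMap.range (H.map (homOfLE (le_top : f ⁻¹' (Set.Ici b) ≤ ⊤))).hom =
      LinearMap.range
        (H.map (homOfLE (le_top : f ⁻¹' (Set.Iic a) ∩ f ⁻¹' (Set.Ici b) ≤ ⊤))).hom ∧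
    (FiniteDimensional κ (H.obj (f ⁻¹' (Set.Iic a) ∩ f ⁻¹' (Set.Ici b))) →
      FiniteDimensional κ
        ↥(LinearMap.range (H.map (homOfLE (le_top : f ⁻¹' (Set.Iic a) ≤ ⊤))).hom ⊓
          LinearMap.range (H.map (homOfLE (le_top : f ⁻¹' (Set.Ici b) ≤ ⊤))).hom)) := by
  have hrange := H.range_map_inf_range_map_eq_range_map le_top le_top
    fun u v huv => (hMV u v huv).imp fun _ => And.left
  refine ⟨hrange, fun _ => ?_⟩
  rw [hrange]
  exact Module.Finite.range _

/-- Let `f : X → ℝ` be continuous and `a ≥ b`, so that the sublevel set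
`X_a = f⁻¹((-∞,a])` and the superlevel set `X^b = f⁻¹([b,∞))` cover `X`.  Homology in a
fixed degree with field coefficients, with all inclusion-induced maps, is encoded as a
functor `H` from the poset of subsets of `X` to vector spaces; the Mayer–Vietoris input
is the hypothesis `hMV` (exactness of `H(X_a ∩ X^b) → H(X_a) ⊕ H(X^b) → H(X)`).
Then `I_a ∩ I^b = image(H(X_a ∩ X^b) → H(X))`; in particular, if `H(X_a ∩ X^b)` is finite
dimensional then so is `I_a ∩ I^b`. -/
theorem image_inter_eq_image_of_interlevel
    (κ : Type) [Field κ] {X : Type} [TopologicalSpace X]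
    (f : X → ℝ) (hf : Continuous f)
    (a b : ℝ) (hba : b ≤ a)
    (H : Set X ⥤ ModuleCat κ)
    (hMV : ∀ (u : H.obj (f ⁻¹' (Set.Iic a))) (v : H.obj (f ⁻¹' (Set.Ici b))),
      H.map (homOfLE (le_top : f ⁻¹' (Set.Iic a) ≤ ⊤)) u =
        H.map (homOfLE (le_top : f ⁻¹' (Set.Ici b) ≤ ⊤)) v →
      ∃ w : H.obj (f ⁻¹' (Set.Iic a) ∩ f ⁻¹' (Set.Ici b)),
        H.map (homOfLE Set.inter_subset_left) w = u ∧
        H.map (homOfLE Set.inter_subset_right) w = v) :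
    LinearMap.range (H.map (homOfLE (le_top : f ⁻¹' (Set.Iic a) ≤ ⊤))).hom ⊓
        LinearMap.range (H.map (homOfLE (le_top : f ⁻¹' (Set.Ici b) ≤ ⊤))).hom =
      LinearMap.range
        (H.map (homOfLE (le_top : f ⁻¹' (Set.Iic a) ∩ f ⁻¹' (Set.Ici b) ≤ ⊤))).hom ∧
    (FiniteDimensional κ (H.obj (f ⁻¹' (Set.Iic a) ∩ f ⁻¹' (Set.Ici b))) →
      FiniteDimensional κ
        ↥(LinearMap.range (H.map (homOfLE (le_top : f ⁻¹' (Set.Iic a) ≤ ⊤))).hom ⊓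
          LinearMap.range (H.map (homOfLE (le_top : f ⁻¹' (Set.Ici b) ≤ ⊤))).hom)) :=
  image_inter_eq_image_of_interlevel_general κ f a b H hMV
end
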